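/- Let R be an associative ring with unit, 𝒳 a class of right R-modules and λ an infinite cardinal. If 𝒳 is closed under direct products and satisfies property ℙ_λ, then every right R-module M with |M| ≤ λ has an 𝒳-preenvelope. -/

import Mathlib

open TensorProduct MulOpposite CategoryTheory

universe u

section Preliminaries

/-- A class of modules over the ring `A` (for `A = Rᵐᵒᵖ` these are right `R`-modules,
for `A = R` left `R`-modules). -/
abbrev ModClass (A : Type u) [Ring A] : Type (u + 1) :=
  ∀ (M : Type u) [AddCommGroup M] [Module A M], Prop

variable (R : Type u) [Ring R]

/-- The subgroup of relations defining the balanced tensor product `M ⊗_R N` of a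
right `R`-module `M` and a left `R`-module `N`. -/
def torRel (M : Type u) [AddCommGroup M] [Module Rᵐᵒᵖ M]
    (N : Type u) [AddCommGroup N] [Module R N] : Submodule ℤ (TensorProduct ℤ M N) :=
  Submodule.span ℤ
    {x | ∃ (r : R) (m : M) (n : N), x = (op r • m) ⊗ₜ[ℤ] n - m ⊗ₜ[ℤ] (r • n)}

/-- The balanced tensor product `M ⊗_R N` of a right `R`-module `M` and a left
`R`-module `N`, as an abelian group (`ℤ`-module). -/
abbrev BTen (M : Type u) [AddCommGroup M] [Module Rᵐᵒᵖ M]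
    (N : Type u) [AddCommGroup N] [Module R N] : Type u :=
  TensorProduct ℤ M N ⧸ torRel R M N

/-- Functoriality of the balanced tensor product in the first (right-module) variable:
the map `f ⊗ id_N`. -/
noncomputable def btMapL {M M' : Type u} [AddCommGroup M] [Module Rᵐᵒᵖ M]
    [AddCommGroup M'] [Module Rᵐᵒᵖ M'] (N : Type u) [AddCommGroup N] [Module R N]
    (f : M →ₗ[Rᵐᵒᵖ] M') : BTen R M N →ₗ[ℤ] BTen R M' N :=
  Submodule.mapQ _ _ (TensorProduct.map f.toAddMonoidHom.toIntLinearMap LinearMap.id)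
    (by
      rw [torRel, Submodule.span_le]
      rintro x ⟨r, m, n, rfl⟩
      show _ ∈ Submodule.span ℤ _
      refine Submodule.subset_span ⟨r, f m, n, ?_⟩
      erw [map_sub, TensorProduct.map_tmul, TensorProduct.map_tmul]
      simp [map_smul])

/-- Functoriality of the balanced tensor product in the second (left-module) variable:
the map `id_M ⊗ g`. -/
noncomputable def btMapR (M : Type u) [AddCommGroup M] [Module Rᵐᵒᵖ M]
    {N N' : Type u} [AddCommGroup N] [Module R N] [AddCommGroup N'] [Module R N']
    (g : N →ₗ[R] N') : BTen R M N →ₗ[ℤ] BTen R M N' :=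
  Submodule.mapQ _ _ (TensorProduct.map LinearMap.id g.toAddMonoidHom.toIntLinearMap)
    (by
      rw [torRel, Submodule.span_le]
      rintro x ⟨r, m, n, rfl⟩
      show _ ∈ Submodule.span ℤ _
      refine Submodule.subset_span ⟨r, m, g n, ?_⟩
      erw [map_sub, TensorProduct.map_tmul, TensorProduct.map_tmul]
      simp [map_smul])

/-- The functor `- ⊗_R N : Mod-R ⥤ Ab` (realized with values in `ℤ`-modules)
given by the balanced tensor product with a fixed left `R`-module `N`. -/
noncomputable def tenFunctor (N : Type u) [AddCommGroup N] [Module R N] :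
    ModuleCat.{u} Rᵐᵒᵖ ⥤ ModuleCat.{u} ℤ where
  obj M := ModuleCat.of ℤ (BTen R M N)
  map {M M'} f := ModuleCat.ofHom (btMapL R N f.hom)
  map_id M := by
    apply ModuleCat.hom_ext
    apply Submodule.linearMap_qext
    apply TensorProduct.ext'
    intro m n
    rfl
  map_comp {M M' M''} f g := by
    apply ModuleCat.hom_ext
    apply Submodule.linearMap_qext
    apply TensorProduct.ext'
    intro m n
    rfl

lemma btMapL_add {M M' : Type u} [AddCommGroup M] [Module Rᵐᵒᵖ M]
    [AddCommGroup M'] [Module Rᵐᵒᵖ M'] (N : Type u) [AddCommGroup N] [Module R N]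
    (f g : M →ₗ[Rᵐᵒᵖ] M') : btMapL R N (f + g) = btMapL R N f + btMapL R N g := by
  apply Submodule.linearMap_qext
  apply TensorProduct.ext'
  intro m n
  exact (congrArg (Submodule.Quotient.mk (p := torRel R M' N))
    (TensorProduct.add_tmul (f m) (g m) n)).trans (Submodule.Quotient.mk_add _)

noncomputable instance tenFunctorAdditive (N : Type u) [AddCommGroup N] [Module R N] :
    (tenFunctor R N).Additive where
  map_add {_ _} {f g} := ModuleCat.hom_ext (btMapL_add R N f.hom g.hom)

/-- `Tor_n^R(M, N) = 0`, where `Tor_n^R(-, N)` is the `n`-th left derived functor of the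
balanced tensor product functor `- ⊗_R N`. -/
def TorVanish (n : ℕ) (M : Type u) [AddCommGroup M] [Module Rᵐᵒᵖ M]
    (N : Type u) [AddCommGroup N] [Module R N] : Prop :=
  Limits.IsZero (((tenFunctor R N).leftDerived n).obj (ModuleCat.of Rᵐᵒᵖ M))

/-- `(𝒯, 𝒮)` is a Tor-pair: `𝒯 = ⊤𝒮` and `𝒮 = 𝒯⊤`, where orthogonality is with respect
to the vanishing of `Tor₁`. -/
def IsTorPair (𝒯 : ModClass Rᵐᵒᵖ) (𝒮 : ModClass R) : Prop :=
  (∀ (M : Type u) [AddCommGroup M] [Module Rᵐᵒᵖ M],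
      𝒯 M ↔ ∀ (S : Type u) [AddCommGroup S] [Module R S], 𝒮 S → TorVanish R 1 M S) ∧
  (∀ (S : Type u) [AddCommGroup S] [Module R S],
      𝒮 S ↔ ∀ (M : Type u) [AddCommGroup M] [Module Rᵐᵒᵖ M], 𝒯 M → TorVanish R 1 M S)

variable {R}

/-- A class of modules is resolving if it contains all projective modules and is closed
under extensions and under kernels of epimorphisms between its members. -/
def Resolving {A : Type u} [Ring A] (𝒞 : ModClass A) : Prop :=
  (∀ (P : Type u) [AddCommGroup P] [Module A P], Module.Projective A P → 𝒞 P) ∧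
  (∀ (M₁ M₂ M₃ : Type u) [AddCommGroup M₁] [Module A M₁] [AddCommGroup M₂] [Module A M₂]
      [AddCommGroup M₃] [Module A M₃] (f : M₁ →ₗ[A] M₂) (g : M₂ →ₗ[A] M₃),
      Function.Injective f → Function.Exact f g → Function.Surjective g →
      𝒞 M₁ → 𝒞 M₃ → 𝒞 M₂) ∧
  (∀ (M₂ M₃ : Type u) [AddCommGroup M₂] [Module A M₂] [AddCommGroup M₃] [Module A M₃]
      (g : M₂ →ₗ[A] M₃), Function.Surjective g → 𝒞 M₂ → 𝒞 M₃ → 𝒞 (LinearMap.ker g))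

/-- `DimLE 𝒞 n M` means that the `𝒞`-projective dimension of `M` is at most `n`: some
projective resolution of `M` has its `(n-1)`-st syzygy in `𝒞` (for `n = 0`, `M ∈ 𝒞`). -/
def DimLE {A : Type u} [Ring A] (𝒞 : ModClass A) : ℕ → ModClass A
  | 0 => 𝒞
  | (n + 1) => fun M _ _ =>
      ∃ (P : Type u) (_ : AddCommGroup P) (_ : Module A P) (f : P →ₗ[A] M),
        Module.Projective A P ∧ Function.Surjective f ∧ DimLE 𝒞 n (LinearMap.ker f)

/-- The `𝒞`-projective dimension of `M`, as an element of `ℕ∞` (`⊤` playing the role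
of `ω`). -/
noncomputable def Dim {A : Type u} [Ring A] (𝒞 : ModClass A) (M : Type u) [AddCommGroup M]
    [Module A M] : ℕ∞ :=
  sInf {d : ℕ∞ | ∃ n : ℕ, d = n ∧ DimLE 𝒞 n M}

/-- The `𝒞`-projective dimension of a class `𝒴` of modules:
`pd_𝒞(𝒴) = sup { pd_𝒞(Y) : Y ∈ 𝒴 }`. -/
noncomputable def DimClass {A : Type u} [Ring A] (𝒞 𝒴 : ModClass A) : ℕ∞ :=
  sSup {d : ℕ∞ | ∃ (M : Type u) (_ : AddCommGroup M) (_ : Module A M), 𝒴 M ∧ d = Dim 𝒞 M}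

/-- The class `Prod(𝒳)` of all modules isomorphic to a direct product of modules in `𝒳`. -/
def ProdClass {A : Type u} [Ring A] (𝒳 : ModClass A) : ModClass A :=
  fun M _ _ => ∃ (I : Type u) (X : I → Type u) (_ : ∀ i, AddCommGroup (X i))
    (_ : ∀ i, Module A (X i)), (∀ i, 𝒳 (X i)) ∧ Nonempty (M ≃ₗ[A] ∀ i, X i)

/-- The class `𝒳` is closed under direct products. -/
def ProdClosed {A : Type u} [Ring A] (𝒳 : ModClass A) : Prop :=
  ∀ (I : Type u) (X : I → Type u) (_ : ∀ i, AddCommGroup (X i)) (_ : ∀ i, Module A (X i)),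
    (∀ i, 𝒳 (X i)) → 𝒳 (∀ i, X i)

/-- The class `𝒳` is closed under direct limits (of directed systems). -/
def DirectLimitClosed {A : Type u} [Ring A] (𝒳 : ModClass A) : Prop :=
  ∀ (ι : Type u) (_ : Preorder ι) (_ : DecidableEq ι) (_ : Nonempty ι)
    (_ : IsDirected ι (· ≤ ·)) (G : ι → Type u) (_ : ∀ i, AddCommGroup (G i))
    (_ : ∀ i, Module A (G i)) (f : ∀ i j, i ≤ j → G i →ₗ[A] G j)
    (_ : DirectedSystem G fun i j h => f i j h),
    (∀ i, 𝒳 (G i)) → 𝒳 (Module.DirectLimit G f)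

variable (R)

/-- A short exact sequence `0 → A → B → C → 0` of right `R`-modules is `𝒮`-pure if for
every `S ∈ 𝒮` the sequence `0 → A ⊗ S → B ⊗ S → C ⊗ S → 0` is exact. -/
def SPureSeq (𝒮 : ModClass R) {M₁ M₂ M₃ : Type u} [AddCommGroup M₁] [Module Rᵐᵒᵖ M₁]
    [AddCommGroup M₂] [Module Rᵐᵒᵖ M₂] [AddCommGroup M₃] [Module Rᵐᵒᵖ M₃]
    (f : M₁ →ₗ[Rᵐᵒᵖ] M₂) (g : M₂ →ₗ[Rᵐᵒᵖ] M₃) : Prop :=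
  ∀ (S : Type u) [AddCommGroup S] [Module R S], 𝒮 S →
    Function.Injective (btMapL R S f) ∧ Function.Exact (btMapL R S f) (btMapL R S g) ∧
      Function.Surjective (btMapL R S g)

/-- A submodule `K ≤ T` is `𝒮`-pure if the sequence `0 → K → T → T/K → 0` is `𝒮`-pure. -/
def SPureSubmodule (𝒮 : ModClass R) (T : Type u) [AddCommGroup T] [Module Rᵐᵒᵖ T]
    (K : Submodule Rᵐᵒᵖ T) : Prop :=
  SPureSeq R 𝒮 K.subtype K.mkQ

/-- A submodule `K ≤ T` of a right `R`-module is pure if for every left `R`-module `X`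
the induced map `K ⊗ X → T ⊗ X` is injective. -/
def PureSubmodule (T : Type u) [AddCommGroup T] [Module Rᵐᵒᵖ T]
    (K : Submodule Rᵐᵒᵖ T) : Prop :=
  ∀ (X : Type u) [AddCommGroup X] [Module R X], Function.Injective (btMapL R X K.subtype)

/-- A left `R`-module `N` is `𝒯`-Mittag-Leffler, for a class `𝒯` of right `R`-modules, if
for every family `{X i}` in `𝒯` the canonical map `(∏ X i) ⊗ N → ∏ (X i ⊗ N)` is injective. -/
def IsMLLeft (𝒯 : ModClass Rᵐᵒᵖ) (N : Type u) [AddCommGroup N] [Module R N] : Prop :=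
  ∀ (I : Type u) (X : I → Type u) (_ : ∀ i, AddCommGroup (X i)) (_ : ∀ i, Module Rᵐᵒᵖ (X i)),
    (∀ i, 𝒯 (X i)) →
    Function.Injective
      (fun (t : BTen R (∀ i, X i) N) (i : I) => btMapL R N (LinearMap.proj i) t)

/-- The class `ML(𝒯)` of `𝒯`-Mittag-Leffler left `R`-modules. -/
def MLClass (𝒯 : ModClass Rᵐᵒᵖ) : ModClass R := fun N _ _ => IsMLLeft R 𝒯 N

/-- A right `R`-module `M` is `𝒴`-Mittag-Leffler, for a class `𝒴` of left `R`-modules, if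
for every family `{Y i}` in `𝒴` the canonical map `M ⊗ (∏ Y i) → ∏ (M ⊗ Y i)` is injective. -/
def IsMLRight (𝒴 : ModClass R) (M : Type u) [AddCommGroup M] [Module Rᵐᵒᵖ M] : Prop :=
  ∀ (I : Type u) (Y : I → Type u) (_ : ∀ i, AddCommGroup (Y i)) (_ : ∀ i, Module R (Y i)),
    (∀ i, 𝒴 (Y i)) →
    Function.Injective
      (fun (t : BTen R M (∀ i, Y i)) (i : I) => btMapR R M (LinearMap.proj i) t)

/-- A right `R`-module `M` is Mittag-Leffler if it is Mittag-Leffler with respect to the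
class of all left `R`-modules. -/
def IsMLRightAll (M : Type u) [AddCommGroup M] [Module Rᵐᵒᵖ M] : Prop :=
  IsMLRight R (fun _ _ _ => True) M

/-- A right `R`-module `M` is flat if tensoring with `M` preserves injectivity of maps of
left `R`-modules. -/
def FlatRight (M : Type u) [AddCommGroup M] [Module Rᵐᵒᵖ M] : Prop :=
  ∀ (N N' : Type u) [AddCommGroup N] [Module R N] [AddCommGroup N'] [Module R N']
    (g : N →ₗ[R] N'), Function.Injective g → Function.Injective (btMapR R M g)

/-- A left `R`-module `N` is flat if tensoring with `N` preserves injectivity of maps of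
right `R`-modules. -/
def FlatLeft (N : Type u) [AddCommGroup N] [Module R N] : Prop :=
  ∀ (M M' : Type u) [AddCommGroup M] [Module Rᵐᵒᵖ M] [AddCommGroup M'] [Module Rᵐᵒᵖ M']
    (f : M →ₗ[Rᵐᵒᵖ] M'), Function.Injective f → Function.Injective (btMapL R N f)

variable {R}

/-- `f : X → M` is an `𝒳`-precover of `M`. -/
def IsPrecover {A : Type u} [Ring A] (𝒳 : ModClass A) {X M : Type u} [AddCommGroup X]
    [Module A X] [AddCommGroup M] [Module A M] (f : X →ₗ[A] M) : Prop :=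
  𝒳 X ∧ ∀ (X' : Type u) [AddCommGroup X'] [Module A X'], 𝒳 X' →
    ∀ g : X' →ₗ[A] M, ∃ h : X' →ₗ[A] X, f ∘ₗ h = g

/-- The class `𝒳` is precovering: every module has an `𝒳`-precover. -/
def Precovering {A : Type u} [Ring A] (𝒳 : ModClass A) : Prop :=
  ∀ (M : Type u) [AddCommGroup M] [Module A M],
    ∃ (X : Type u) (_ : AddCommGroup X) (_ : Module A X) (f : X →ₗ[A] M), IsPrecover 𝒳 f

/-- `g : M → X` is an `𝒳`-preenvelope of `M`. -/
def IsPreenvelope {A : Type u} [Ring A] (𝒳 : ModClass A) {M X : Type u} [AddCommGroup M]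
    [Module A M] [AddCommGroup X] [Module A X] (g : M →ₗ[A] X) : Prop :=
  𝒳 X ∧ ∀ (X' : Type u) [AddCommGroup X'] [Module A X'], 𝒳 X' →
    ∀ h : M →ₗ[A] X', ∃ k : X →ₗ[A] X', k ∘ₗ g = h

/-- The class `𝒳` is preenveloping: every module has an `𝒳`-preenvelope. -/
def Preenveloping {A : Type u} [Ring A] (𝒳 : ModClass A) : Prop :=
  ∀ (M : Type u) [AddCommGroup M] [Module A M],
    ∃ (X : Type u) (_ : AddCommGroup X) (_ : Module A X) (g : M →ₗ[A] X), IsPreenvelope 𝒳 g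

/-- The class `Gen(𝒳)` of modules generated by `𝒳`, i.e. epimorphic images of direct sums
of modules in `𝒳`. -/
def GenClass {A : Type u} [Ring A] (𝒳 : ModClass A) : ModClass A :=
  fun M _ _ => ∃ (I : Type u) (X : I → Type u) (_ : ∀ i, AddCommGroup (X i))
    (_ : ∀ i, Module A (X i)) (φ : DirectSum I X →ₗ[A] M),
      (∀ i, 𝒳 (X i)) ∧ Function.Surjective φ

/-- The trace `t_𝒳(M)` of a class `𝒳` in a module `M`: the sum of the images of all
homomorphisms from members of `𝒳` to `M`. -/
def traceSub {A : Type u} [Ring A] (𝒳 : ModClass A) (M : Type u) [AddCommGroup M]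
    [Module A M] : Submodule A M :=
  sSup {p : Submodule A M | ∃ (X : Type u) (_ : AddCommGroup X) (_ : Module A X)
    (f : X →ₗ[A] M), 𝒳 X ∧ p = LinearMap.range f}

/-- `F` is a continuous (well-ordered, smooth) chain of submodules of `M` of length `len`,
starting at `0` and exhausting `M`. -/
def IsOrdFiltration {A : Type u} [Ring A] {M : Type u} [AddCommGroup M] [Module A M]
    (len : Ordinal.{u}) (F : Ordinal.{u} → Submodule A M) : Prop :=
  F 0 = ⊥ ∧ F len = ⊤ ∧ Monotone F ∧
    ∀ β : Ordinal.{u}, β ≤ len → Order.IsSuccLimit β → F β = ⨆ (α : Ordinal.{u}) (_ : α < β), F α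

/-- The class `Filt-𝒢` of `𝒢`-filtered modules, for a family (set) `𝒢 = (G i)` of modules:
modules admitting a continuous chain of submodules starting at `0`, exhausting the module,
whose consecutive quotients are isomorphic to members of `𝒢`. -/
def FiltClass (A : Type u) [Ring A] {ι : Type u} (G : ι → Type u) [∀ i, AddCommGroup (G i)]
    [∀ i, Module A (G i)] : ModClass A :=
  fun M _ _ => ∃ (len : Ordinal.{u}) (F : Ordinal.{u} → Submodule A M),
    IsOrdFiltration len F ∧ ∀ α : Ordinal.{u}, α < len → ∃ i : ι,
      Nonempty ((↥(F (α + 1)) ⧸ (F α).comap (F (α + 1)).subtype) ≃ₗ[A] G i)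

/-- A class of modules is deconstructible if it is the class of `𝒢`-filtered modules for
some set `𝒢` of modules. -/
def Deconstructible {A : Type u} [Ring A] (𝒳 : ModClass A) : Prop :=
  ∃ (ι : Type u) (G : ι → Type u) (_ : ∀ i, AddCommGroup (G i)) (_ : ∀ i, Module A (G i)),
    ∀ (M : Type u) [AddCommGroup M] [Module A M], 𝒳 M ↔ FiltClass A G M

/-- `Ext¹_A(X, C) = 0`, where `Ext` is computed in the category of `A`-modules. -/
def Ext1Vanish {A : Type u} [Ring A] (X C : Type u) [AddCommGroup X] [Module A X]
    [AddCommGroup C] [Module A C] : Prop :=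
  Limits.IsZero ((((Ext ℤ (ModuleCat.{u} A) 1).obj (Opposite.op (ModuleCat.of A X))).obj
    (ModuleCat.of A C)))

/-- The property `ℙ_λ`: there is an infinite cardinal `κ_λ` such that any submodule of
cardinality at most `λ` of a member of `𝒳` can be enlarged to a submodule in `𝒳` of
cardinality at most `κ_λ`. -/
def PropertyP {A : Type u} [Ring A] (𝒳 : ModClass A) (lam : Cardinal.{u}) : Prop :=
  ∃ κ : Cardinal.{u}, Cardinal.aleph0 ≤ κ ∧
    ∀ (X : Type u) [AddCommGroup X] [Module A X], 𝒳 X →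
      ∀ S : Submodule A X, Cardinal.mk S ≤ lam →
        ∃ Y : Submodule A X, S ≤ Y ∧ 𝒳 Y ∧ Cardinal.mk Y ≤ κ


/-! By `ℙ_λ`, every map from `M` (with `|M| ≤ λ`) to a member of `𝒳` factors through a member
of `𝒳` of cardinality at most `κ_λ`. Up to isomorphism these small members, together with a map
from `M`, form a set, so the product of all of them is in `𝒳`, and the diagonal map from `M`
into it is a preenvelope. -/

/-- The carrier is a subset of `T` so that these data form a set. As `𝒳` need not be closed
under isomorphism, the carrier is only required to be isomorphic to a member of `𝒳`, and `model`
is a chosen one. -/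
structure SmallTarget (A : Type u) [Ring A] (𝒳 : ModClass A) (M T : Type u)
    [AddCommGroup M] [Module A M] : Type u where
  carrier : Set T
  [addCommGroup : AddCommGroup carrier]
  [module : Module A carrier]
  map : M →ₗ[A] carrier
  exists_equiv : ∃ (Z : Type u) (_ : AddCommGroup Z) (_ : Module A Z),
    𝒳 Z ∧ Nonempty (carrier ≃ₗ[A] Z)

namespace SmallTarget

attribute [instance] addCommGroup module

variable {A : Type u} [Ring A] {𝒳 : ModClass A} {M T : Type u} [AddCommGroup M] [Module A M]

noncomputable def model (i : SmallTarget A 𝒳 M T) : Type u := i.exists_equiv.choose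

noncomputable instance (i : SmallTarget A 𝒳 M T) : AddCommGroup i.model :=
  i.exists_equiv.choose_spec.choose

noncomputable instance (i : SmallTarget A 𝒳 M T) : Module A i.model :=
  i.exists_equiv.choose_spec.choose_spec.choose

lemma model_mem (i : SmallTarget A 𝒳 M T) : 𝒳 i.model :=
  i.exists_equiv.choose_spec.choose_spec.choose_spec.1

noncomputable def equivModel (i : SmallTarget A 𝒳 M T) : i.carrier ≃ₗ[A] i.model :=
  i.exists_equiv.choose_spec.choose_spec.choose_spec.2.some

noncomputable def toModel (i : SmallTarget A 𝒳 M T) : M →ₗ[A] i.model :=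
  i.equivModel.toLinearMap ∘ₗ i.map

lemma exists_comp_toModel_eq {Y : Type u} [AddCommGroup Y] [Module A Y] (hY : 𝒳 Y)
    (hYT : Cardinal.mk Y ≤ Cardinal.mk T) (f : M →ₗ[A] Y) :
    ∃ (i : SmallTarget A 𝒳 M T) (k : i.model →ₗ[A] Y), k ∘ₗ i.toModel = f := by
  obtain ⟨e⟩ := Cardinal.le_def _ _ |>.1 hYT
  let eY : Set.range e ≃ Y := (Equiv.ofInjective e e.injective).symm
  let _ : AddCommGroup (Set.range e) := eY.addCommGroup
  let _ : Module A (Set.range e) := eY.module A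
  let ℓ : Set.range e ≃ₗ[A] Y := eY.linearEquiv A
  let i : SmallTarget A 𝒳 M T := ⟨Set.range e, ℓ.symm.toLinearMap ∘ₗ f, Y, _, _, hY, ⟨ℓ⟩⟩
  refine ⟨i, ℓ.toLinearMap ∘ₗ i.equivModel.symm.toLinearMap, LinearMap.ext fun m => ?_⟩
  simp [i, toModel]

end SmallTarget

lemma isPreenvelope_pi {A : Type u} [Ring A] {𝒳 : ModClass A} (hprod : ProdClosed 𝒳)
    {M : Type u} [AddCommGroup M] [Module A M] {I : Type u} {Z : I → Type u}
    [∀ i, AddCommGroup (Z i)] [∀ i, Module A (Z i)] (hZ : ∀ i, 𝒳 (Z i))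
    {g : ∀ i, M →ₗ[A] Z i}
    (hg : ∀ (X : Type u) [AddCommGroup X] [Module A X], 𝒳 X →
      ∀ h : M →ₗ[A] X, ∃ (i : I) (k : Z i →ₗ[A] X), k ∘ₗ g i = h) :
    IsPreenvelope 𝒳 (LinearMap.pi g) := by
  refine ⟨hprod I Z _ _ hZ, fun X _ _ hX h => ?_⟩
  obtain ⟨i, k, rfl⟩ := hg X hX h
  exact ⟨k ∘ₗ LinearMap.proj i, by rw [LinearMap.comp_assoc, LinearMap.proj_pi]⟩

theorem stmt16_general (R : Type u) [Ring R] (𝒳 : ModClass Rᵐᵒᵖ) (lam : Cardinal.{u})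
    (hprod : ProdClosed 𝒳) (hP : PropertyP 𝒳 lam) :
    ∀ (M : Type u) [AddCommGroup M] [Module Rᵐᵒᵖ M], Cardinal.mk M ≤ lam →
      ∃ (X : Type u) (_ : AddCommGroup X) (_ : Module Rᵐᵒᵖ X) (g : M →ₗ[Rᵐᵒᵖ] X),
        IsPreenvelope 𝒳 g := by
  intro M _ _ hM
  obtain ⟨κ, -, hκ⟩ := hP
  refine ⟨_, _, _, _, isPreenvelope_pi (g := SmallTarget.toModel (T := κ.out)) hprod
    SmallTarget.model_mem fun X _ _ hX h => ?_⟩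
  obtain ⟨Y, hrange, hY, hYκ⟩ := hκ X hX (LinearMap.range h)
    ((Cardinal.mk_le_of_surjective h.surjective_rangeRestrict).trans hM)
  obtain ⟨i, k, hk⟩ := SmallTarget.exists_comp_toModel_eq (T := κ.out) hY
    (by rwa [Cardinal.mk_out]) (h.codRestrict Y fun m => hrange ⟨m, rfl⟩)
  exact ⟨i, Y.subtype ∘ₗ k, by rw [LinearMap.comp_assoc, hk]; rfl⟩

/-- If a class `𝒳` of right `R`-modules is closed under direct
products and satisfies property `ℙ_λ` for an infinite cardinal `λ`, then every module of
cardinality at most `λ` has an `𝒳`-preenvelope. -/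
theorem stmt16 (R : Type u) [Ring R] (𝒳 : ModClass Rᵐᵒᵖ) (lam : Cardinal.{u})
    (hlam : Cardinal.aleph0 ≤ lam) (hprod : ProdClosed 𝒳) (hP : PropertyP 𝒳 lam) :
    ∀ (M : Type u) [AddCommGroup M] [Module Rᵐᵒᵖ M], Cardinal.mk M ≤ lam →
      ∃ (X : Type u) (_ : AddCommGroup X) (_ : Module Rᵐᵒᵖ X) (g : M →ₗ[Rᵐᵒᵖ] X),
        IsPreenvelope 𝒳 g :=
  stmt16_general R 𝒳 lam hprod hP
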